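/- Suppose H_n = [[u_n, w_n],[w_n, v_n]] are 2×2 symmetric positive semidefinite matrices with u_n, v_n ≥ 0, w_n = sqrt(u_n v_n) cos θ_n, and liminf_n sin²θ_n = α > 0. Then λ_min(H_n) → ∞ if and only if min(u_n, v_n) → ∞. -/

import Mathlib

/-!
For a real symmetric 2×2 matrix the eigenvalues have the same sum as the diagonal entries and
product `det ≤ u v`, so they are more spread out and `λ_min ≤ min(u, v)`. Conversely
`λ_min ≥ det / trace = u v sin²θ / (u + v) ≥ (sin²θ / 2) min(u, v)`, and `sin²θ_n > α / 2`
eventually.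
-/

open Filter

section OrderedRing

variable {R : Type*} [CommRing R] [LinearOrder R] [IsStrictOrderedRing R]

theorem min_le_min_of_add_eq_of_mul_le {a b u v : R} (hsum : a + b = u + v)
    (hprod : a * b ≤ u * v) : min a b ≤ min u v := by
  obtain rfl : b = u + v - a := by linear_combination hsum
  rcases le_total a (u + v - a) with hab | hab <;> rcases le_total u v with huv | huv <;>
    simp only [min_eq_left, min_eq_right, hab, huv] <;> nlinarith

theorem mul_le_add_mul_min {a b : R} (ha : 0 ≤ a) (hb : 0 ≤ b) :
    a * b ≤ (a + b) * min a b := by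
  rcases le_total a b with hab | hab <;>
    simp only [min_eq_left, min_eq_right, hab] <;> nlinarith

theorem add_mul_min_le_two_mul {u v : R} (hu : 0 ≤ u) (hv : 0 ≤ v) :
    (u + v) * min u v ≤ 2 * (u * v) := by
  rcases le_total u v with huv | huv <;>
    simp only [min_eq_left, min_eq_right, huv] <;> nlinarith

end OrderedRing

theorem half_mul_min_le_of_mul_le {K : Type*} [Field K] [LinearOrder K] [IsStrictOrderedRing K]
    {u v s m : K} (hmin : 0 < min u v) (hs : 0 ≤ s) (h : s * (u * v) ≤ (u + v) * m) :
    s / 2 * min u v ≤ m := by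
  have hu : 0 < u := hmin.trans_le (min_le_left u v)
  have hv : 0 < v := hmin.trans_le (min_le_right u v)
  refine le_of_mul_le_mul_left ?_ (add_pos hu hv)
  calc (u + v) * (s / 2 * min u v) = s / 2 * ((u + v) * min u v) := by ring
    _ ≤ s / 2 * (2 * (u * v)) :=
      mul_le_mul_of_nonneg_left (add_mul_min_le_two_mul hu.le hv.le) (by positivity)
    _ = s * (u * v) := by ring
    _ ≤ (u + v) * m := h

theorem ciInf_fin_two {α : Type*} [ConditionallyCompleteLinearOrder α] (f : Fin 2 → α) :
    ⨅ i, f i = min (f 0) (f 1) := by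
  refine le_antisymm (le_min (ciInf_le (Finite.bddBelow_range f) 0)
    (ciInf_le (Finite.bddBelow_range f) 1)) (le_ciInf fun i => ?_)
  fin_cases i
  exacts [min_le_left _ _, min_le_right _ _]

namespace Matrix

variable {A : Matrix (Fin 2) (Fin 2) ℝ}

theorem IsHermitian.eigenvalues_add_fin_two (hA : A.IsHermitian) :
    hA.eigenvalues 0 + hA.eigenvalues 1 = A.trace := by
  simpa [Fin.sum_univ_two] using hA.trace_eq_sum_eigenvalues.symm

theorem IsHermitian.eigenvalues_mul_fin_two (hA : A.IsHermitian) :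
    hA.eigenvalues 0 * hA.eigenvalues 1 = A.det := by
  simpa [Fin.prod_univ_two] using hA.det_eq_prod_eigenvalues.symm

theorem IsHermitian.iInf_eigenvalues_le_min_diag (hA : A.IsHermitian) :
    ⨅ i, hA.eigenvalues i ≤ min (A 0 0) (A 1 1) := by
  rw [ciInf_fin_two]
  have hsum : hA.eigenvalues 0 + hA.eigenvalues 1 = A 0 0 + A 1 1 := by
    simpa [trace_fin_two] using hA.eigenvalues_add_fin_two
  refine min_le_min_of_add_eq_of_mul_le hsum ?_
  have hsymm : A 1 0 = A 0 1 := by simpa using congr_fun₂ hA 0 1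
  rw [hA.eigenvalues_mul_fin_two, det_fin_two, hsymm]
  nlinarith [mul_self_nonneg (A 0 1)]

theorem PosSemidef.det_le_trace_mul_iInf_eigenvalues (hA : A.PosSemidef) :
    A.det ≤ A.trace * ⨅ i, hA.1.eigenvalues i := by
  rw [ciInf_fin_two, ← hA.1.eigenvalues_mul_fin_two, ← hA.1.eigenvalues_add_fin_two]
  exact mul_le_add_mul_min (hA.eigenvalues_nonneg 0) (hA.eigenvalues_nonneg 1)

end Matrix

theorem det_of_sqrt_mul_mul_cos {u v : ℝ} (hu : 0 ≤ u) (hv : 0 ≤ v) (θ : ℝ) :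
    (Matrix.of ![![u, √(u * v) * Real.cos θ], ![√(u * v) * Real.cos θ, v]]).det =
      u * v * Real.sin θ ^ 2 := by
  rw [Matrix.det_fin_two_of, mul_mul_mul_comm, Real.mul_self_sqrt (mul_nonneg hu hv),
    Real.sin_sq]
  ring

/-- Example 1: for 2×2 symmetric positive semidefinite matrices
`H_n = [[u_n,w_n],[w_n,v_n]]` with `w_n = √(u_n v_n)·cos θ_n` and
`liminf sin²θ_n = α > 0`, one has `λ_min(H_n) → ∞` iff `min(u_n, v_n) → ∞`. -/
theorem stmt5 (u v w θ : ℕ → ℝ) (hu : ∀ n, 0 ≤ u n) (hv : ∀ n, 0 ≤ v n)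
    (hw : ∀ n, w n = Real.sqrt (u n * v n) * Real.cos (θ n))
    (H : ℕ → Matrix (Fin 2) (Fin 2) ℝ)
    (hHdef : ∀ n, H n = Matrix.of ![![u n, w n], ![w n, v n]])
    (hpsd : ∀ n, (H n).PosSemidef)
    (α : ℝ) (hα : 0 < α)
    (hliminf : Filter.liminf (fun n => Real.sin (θ n) ^ 2) atTop = α) :
    Tendsto (fun n => ⨅ i, (hpsd n).1.eigenvalues i) atTop atTop ↔
      Tendsto (fun n => min (u n) (v n)) atTop atTop := by
  have upper n : ⨅ i, (hpsd n).1.eigenvalues i ≤ min (u n) (v n) := by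
    simpa [hHdef n] using (hpsd n).1.iInf_eigenvalues_le_min_diag
  have lower n :
      u n * v n * Real.sin (θ n) ^ 2 ≤ (u n + v n) * ⨅ i, (hpsd n).1.eigenvalues i := by
    have hdet : (H n).det = u n * v n * Real.sin (θ n) ^ 2 := by
      rw [hHdef n, hw n, det_of_sqrt_mul_mul_cos (hu n) (hv n)]
    have htrace : (H n).trace = u n + v n := by simp [hHdef n, Matrix.trace_fin_two]
    simpa only [hdet, htrace] using (hpsd n).det_le_trace_mul_iInf_eigenvalues
  refine ⟨tendsto_atTop_mono upper, fun h => ?_⟩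
  have hsin : ∀ᶠ n in atTop, α / 2 < Real.sin (θ n) ^ 2 :=
    eventually_lt_of_lt_liminf (by linarith)
      ⟨0, eventually_map.2 (.of_forall fun n => sq_nonneg _)⟩
  have hbound :
      ∀ᶠ n in atTop, α / 2 / 2 * min (u n) (v n) ≤ ⨅ i, (hpsd n).1.eigenvalues i := by
    filter_upwards [hsin, h.eventually_gt_atTop 0] with n hs hmin
    refine half_mul_min_le_of_mul_le hmin (by positivity) (le_trans ?_ (lower n))
    nlinarith [mul_nonneg (hu n) (hv n)]
  exact tendsto_atTop_mono' _ hbound (h.const_mul_atTop (by positivity))
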